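/- For every r ≥ 1 and every block boundary i = D(j) (1 ≤ j ≤ t), the double coset I_r t_i I_r ⊆ GL_n(ℚ_p) decomposes as the disjoint union I_r t_i I_r = ⨆_{B'} u(B')·t_i·I_r, where B' runs over all i×(n−i) matrices with entries in {0, 1, …, p−1}; in particular, I_r t_i I_r is the union of exactly p^{i(n−i)} distinct left cosets of I_r, and this set of coset representatives does not depend on r. -/

import Mathlib

/-!
STATEMENT 5: For every r ≥ 1 and every block boundary i = D(j) (1 ≤ j ≤ t), the double
coset I_r t_i I_r ⊆ GL_n(ℚ_p) decomposes as the disjoint union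
I_r t_i I_r = ⨆_{B'} u(B')·t_i·I_r, where B' runs over all i×(n−i) matrices with entries
in {0, 1, …, p−1}; in particular, I_r t_i I_r is the union of exactly p^{i(n−i)} distinct
left cosets of I_r (and this set of coset representatives does not depend on r).
-/

open Matrix

noncomputable section
namespace PIw

/-- Partial sums of the partition: `Dsum nn j = n_1 + ⋯ + n_j` (`nn` is 0-indexed). -/
def Dsum {t : ℕ} (nn : Fin t → ℕ) (j : ℕ) : ℕ :=
  ∑ i ∈ Finset.range j, if h : i < t then nn ⟨i, h⟩ else 0

/-- Index (0-indexed) of the block containing position `k`. -/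
def blkOf {t : ℕ} (nn : Fin t → ℕ) (k : ℕ) : ℕ :=
  ((Finset.range t).filter fun j => Dsum nn (j + 1) ≤ k).card

/-- The block function on `Fin n`. -/
def bfun {t : ℕ} (nn : Fin t → ℕ) : Fin (Dsum nn t) → ℕ := fun k => blkOf nn (k : ℕ)

/-- Block upper triangular (entries strictly below the diagonal blocks vanish). -/
def IsBlockUpper {t : ℕ} (nn : Fin t → ℕ) {R : Type*} [CommRing R]
    (M : Matrix (Fin (Dsum nn t)) (Fin (Dsum nn t)) R) : Prop :=
  M.BlockTriangular (bfun nn)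

/-- Block upper triangular with identity diagonal blocks. -/
def IsBlockUnipotent {t : ℕ} (nn : Fin t → ℕ) {R : Type*} [CommRing R]
    (M : Matrix (Fin (Dsum nn t)) (Fin (Dsum nn t)) R) : Prop :=
  IsBlockUpper nn M ∧
    ∀ k l, bfun nn k = bfun nn l → M k l = if k = l then 1 else 0

variable (p : ℕ) [Fact p.Prime]

/-- Entrywise reduction mod `p^r`. -/
def redMat (r : ℕ) {N : ℕ} (M : Matrix (Fin N) (Fin N) ℤ_[p]) :
    Matrix (Fin N) (Fin N) (ZMod (p ^ r)) :=
  M.map (PadicInt.toZModPow r)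

/-- Membership in the pro-`p` `P`-Iwahori subgroup `I_r`. -/
def memIw {t : ℕ} (nn : Fin t → ℕ) (r : ℕ) (g : GL (Fin (Dsum nn t)) ℤ_[p]) : Prop :=
  IsBlockUnipotent nn (redMat p r g.val)

/-- Coefficient-wise inclusion `ℤ_p → ℚ_p` on matrices. -/
def toQ {N : ℕ} (M : Matrix (Fin N) (Fin N) ℤ_[p]) : Matrix (Fin N) (Fin N) ℚ_[p] :=
  M.map (fun x => (x : ℚ_[p]))

/-- The matrix `t_i = diag(p·1_i, 1_{n-i})` in `GL_n(ℚ_p)`. -/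
def tMat (N i : ℕ) : Matrix (Fin N) (Fin N) ℚ_[p] :=
  Matrix.diagonal fun k => if (k : ℕ) < i then (p : ℚ_[p]) else 1

/-- The unipotent matrix `u(B) = (1_i, B; 0, 1_{n-i})`, where `B` is an `i × (n-i)`
matrix of natural numbers (viewed in `ℚ_p`). -/
def uMat (N i : ℕ) (B : Matrix (Fin i) (Fin (N - i)) ℕ) :
    Matrix (Fin N) (Fin N) ℚ_[p] := fun k l =>
  if h : (k : ℕ) < i ∧ i ≤ (l : ℕ) then
    (B ⟨(k : ℕ), h.1⟩ ⟨(l : ℕ) - i, Nat.sub_lt_sub_right h.2 l.isLt⟩ : ℚ_[p])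
  else if k = l then 1 else 0

/-! Modulo `p`, an element `a ∈ I_r` has an invertible lower-right block `D` (it is block
unipotent), so one row operation `u(B')⁻¹` with `B' ≡ A D⁻¹ (mod p)`, where `A` is the
top-right block, makes the top-right block of `u(B')⁻¹ a` divisible by `p`. Conjugating by
`t_i` divides that block by `p` and multiplies the bottom-left block (already `≡ 0 mod p^r`)
by `p`, so `c = t_i⁻¹ u(B')⁻¹ a t_i` is integral, has the same determinant, and still lies in
`I_r`; thus `a t_i = u(B') t_i c`. Conversely `u(B') ∈ I_r`. If
`u(B₁) t_i I_r = u(B₂) t_i I_r`, then `t_i⁻¹ u(B₁ - B₂) t_i` is integral, i.e. `p ∣ B₁ - B₂`,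
forcing `B₁ = B₂` since all entries lie in `{0, …, p - 1}`. -/

section BlockUnipotent

variable {ι κ α R S : Type*} [DecidableEq ι] [DecidableEq κ] [LinearOrder α] [CommRing R]
  [CommRing S]

def BlockUnipotent (M : Matrix ι ι R) (b : ι → α) : Prop :=
  M.BlockTriangular b ∧ ∀ k l, b k = b l → M k l = if k = l then 1 else 0

namespace BlockUnipotent

variable {M M' : Matrix ι ι R} {b : ι → α}

theorem one (b : ι → α) : BlockUnipotent (1 : Matrix ι ι R) b :=
  ⟨blockTriangular_one, fun _ _ _ => one_apply⟩

theorem of_eq_of_not_lt (hM' : BlockUnipotent M' b) (h : ∀ k l, ¬b k < b l → M k l = M' k l) :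
    BlockUnipotent M b :=
  ⟨fun k l hlk => (h k l (lt_asymm hlk)).trans (hM'.1 hlk),
    fun k l hkl => (h k l hkl.not_lt).trans (hM'.2 k l hkl)⟩

theorem mul [Fintype ι] (hM : BlockUnipotent M b) (hM' : BlockUnipotent M' b) :
    BlockUnipotent (M * M') b := by
  refine ⟨hM.1.mul hM'.1, fun k l hkl => ?_⟩
  have h : ∀ m, M k m * M' m l = (if k = m then 1 else 0) * M' m l := by
    intro m
    rcases lt_trichotomy (b m) (b k) with h | h | h
    · rw [hM.1 h, if_neg (by rintro rfl; exact lt_irrefl _ h)]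
    · rw [hM.2 k m h.symm]
    · rw [hM'.1 (hkl ▸ h), mul_zero, mul_zero]
  rw [mul_apply, Finset.sum_congr rfl fun m _ => h m]
  simp [hM'.2 k l hkl]

theorem map (h : BlockUnipotent M b) (f : R →+* S) : BlockUnipotent (M.map f) b := by
  refine ⟨h.1.map f, fun k l hkl => ?_⟩
  rw [map_apply, h.2 k l hkl]
  split_ifs <;> simp

theorem submatrix (h : BlockUnipotent M b) {e : κ → ι} (he : Function.Injective e) :
    BlockUnipotent (M.submatrix e e) (b ∘ e) :=
  ⟨h.1.submatrix, fun k l hkl => by simp only [submatrix_apply, h.2 _ _ hkl, he.eq_iff]⟩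

theorem det_eq_one [Fintype ι] (h : BlockUnipotent M b) : M.det = 1 := by
  rw [h.1.det]
  refine Finset.prod_eq_one fun a _ => ?_
  have : M.toSquareBlock b a = 1 := by
    ext k l
    simp only [toSquareBlock_def, of_apply, h.2 k.1 l.1 (k.2.trans l.2.symm), one_apply,
      Subtype.ext_iff]
  rw [this, det_one]

theorem isUnit [Fintype ι] (h : BlockUnipotent M b) : IsUnit M :=
  (isUnit_iff_isUnit_det M).2 (h.det_eq_one ▸ isUnit_one)

end BlockUnipotent

theorem blockUnipotent_one_add {W : Matrix ι ι R} {b : ι → α}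
    (hW : ∀ k l, ¬b k < b l → W k l = 0) : BlockUnipotent (1 + W) b :=
  (BlockUnipotent.one b).of_eq_of_not_lt fun k l h => by rw [Matrix.add_apply, hW k l h, add_zero]

end BlockUnipotent

section Corner

variable {α R : Type*} [LinearOrder α] [CommRing R] {N i : ℕ}

def SplitsAt (b : Fin N → α) (i : ℕ) : Prop :=
  ∀ k l : Fin N, (k : ℕ) < i → i ≤ (l : ℕ) → b k < b l

def botIdx (l : Fin (N - i)) : Fin N := ⟨i + l, by omega⟩

theorem botIdx_injective : Function.Injective (botIdx (N := N) (i := i)) :=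
  fun l l' h => Fin.ext (by simpa [botIdx] using congrArg Fin.val h)

variable (R) in
def cornerMat (N i : ℕ) (B : Matrix (Fin i) (Fin (N - i)) ℕ) : Matrix (Fin N) (Fin N) R :=
  fun k l =>
    if h : (k : ℕ) < i ∧ i ≤ (l : ℕ) then
      (B ⟨(k : ℕ), h.1⟩ ⟨(l : ℕ) - i, Nat.sub_lt_sub_right h.2 l.isLt⟩ : R)
    else 0

variable {B B' : Matrix (Fin i) (Fin (N - i)) ℕ}

theorem cornerMat_eq_zero {k l : Fin N} (h : ¬((k : ℕ) < i ∧ i ≤ (l : ℕ))) :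
    cornerMat R N i B k l = 0 :=
  dif_neg h

theorem cornerMat_apply_botIdx {k : Fin N} (hk : (k : ℕ) < i) (l : Fin (N - i)) :
    cornerMat R N i B k (botIdx l) = B ⟨k, hk⟩ l := by
  rw [cornerMat, dif_pos ⟨hk, Nat.le_add_right _ _⟩]
  congr
  simp [botIdx]

theorem cornerMat_eq_zero_of_splitsAt {b : Fin N → α} (hb : SplitsAt b i) {k l : Fin N}
    (h : ¬b k < b l) : cornerMat R N i B k l = 0 :=
  cornerMat_eq_zero fun hkl => h (hb k l hkl.1 hkl.2)

theorem cornerMat_mul_apply (M : Matrix (Fin N) (Fin N) R) {k : Fin N} (hk : (k : ℕ) < i)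
    (l : Fin N) :
    (cornerMat R N i B * M) k l = ∑ m, (B ⟨k, hk⟩ m : R) * M (botIdx m) l := by
  rw [mul_apply]
  refine (Fintype.sum_of_injective botIdx botIdx_injective _
    (fun m => cornerMat R N i B k m * M m l) (fun m hm => ?_)
    fun m => by rw [cornerMat_apply_botIdx hk]).symm
  rw [cornerMat_eq_zero, zero_mul]
  refine fun h => hm ⟨⟨m - i, by omega⟩, Fin.ext ?_⟩
  simp only [botIdx]
  omega

theorem cornerMat_mul_cornerMat : cornerMat R N i B * cornerMat R N i B' = 0 := by
  ext k l
  by_cases hk : (k : ℕ) < i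
  · rw [cornerMat_mul_apply _ hk, Matrix.zero_apply]
    refine Finset.sum_eq_zero fun m _ => ?_
    rw [cornerMat_eq_zero (by simp [botIdx]), mul_zero]
  · rw [mul_apply, Matrix.zero_apply]
    exact Finset.sum_eq_zero fun m _ => by rw [cornerMat_eq_zero (by omega), zero_mul]

theorem one_sub_cornerMat_mul_one_add_cornerMat :
    (1 - cornerMat R N i B') * (1 + cornerMat R N i B) =
      1 + cornerMat R N i B - cornerMat R N i B' := by
  rw [sub_mul, one_mul, mul_add, mul_one, cornerMat_mul_cornerMat]
  abel

theorem one_add_cornerMat_mul_one_sub_cornerMat :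
    (1 + cornerMat R N i B) * (1 - cornerMat R N i B) = 1 := by
  rw [mul_sub, mul_one, add_mul, one_mul, cornerMat_mul_cornerMat]
  abel

theorem cornerMat_map {S : Type*} [CommRing S] (f : R →+* S) :
    (cornerMat R N i B).map f = cornerMat S N i B := by
  ext k l
  rw [map_apply, cornerMat, cornerMat]
  split_ifs <;> simp

theorem blockUnipotent_one_add_cornerMat {b : Fin N → α} (hb : SplitsAt b i) :
    BlockUnipotent (1 + cornerMat R N i B) b :=
  blockUnipotent_one_add fun _ _ h => cornerMat_eq_zero_of_splitsAt hb h

theorem blockUnipotent_one_sub_cornerMat {b : Fin N → α} (hb : SplitsAt b i) :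
    BlockUnipotent (1 - cornerMat R N i B) b := by
  rw [sub_eq_add_neg]
  exact blockUnipotent_one_add fun _ _ h => by rw [neg_apply, cornerMat_eq_zero_of_splitsAt hb h,
    neg_zero]

end Corner

section Padic

variable {α : Type*} [LinearOrder α] {N i r : ℕ}

theorem natCast_dvd_iff_toZModPow_one_eq_zero (x : ℤ_[p]) :
    (p : ℤ_[p]) ∣ x ↔ PadicInt.toZModPow 1 x = 0 := by
  rw [← RingHom.mem_ker, PadicInt.ker_toZModPow, Ideal.mem_span_singleton, pow_one]

theorem eq_of_natCast_dvd_sub {m n : ℕ} (hm : m < p) (hn : n < p)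
    (h : (p : ℤ_[p]) ∣ (m : ℤ_[p]) - n) : m = n := by
  rwa [natCast_dvd_iff_toZModPow_one_eq_zero, map_sub, map_natCast, map_natCast, sub_eq_zero,
    ZMod.natCast_eq_natCast_iff', pow_one, Nat.mod_eq_of_lt hm, Nat.mod_eq_of_lt hn] at h

theorem redMat_mul (M M' : Matrix (Fin N) (Fin N) ℤ_[p]) :
    redMat p r (M * M') = redMat p r M * redMat p r M' :=
  Matrix.map_mul

theorem redMat_eq_map_redMat {s : ℕ} (hsr : s ≤ r) (M : Matrix (Fin N) (Fin N) ℤ_[p]) :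
    redMat p s M = (redMat p r M).map (ZMod.castHom (pow_dvd_pow p hsr) _) := by
  rw [redMat, redMat, Matrix.map_map, ← RingHom.coe_comp,
    PadicInt.zmod_cast_comp_toZModPow _ _ hsr]

theorem toQ_eq_mapMatrix (M : Matrix (Fin N) (Fin N) ℤ_[p]) :
    toQ p M = PadicInt.Coe.ringHom.mapMatrix M :=
  rfl

theorem toQ_mul (M M' : Matrix (Fin N) (Fin N) ℤ_[p]) : toQ p (M * M') = toQ p M * toQ p M' := by
  simp only [toQ_eq_mapMatrix, map_mul]

theorem toQ_injective : Function.Injective (toQ p (N := N)) :=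
  Matrix.map_injective Subtype.coe_injective

theorem uMat_eq_toQ (B : Matrix (Fin i) (Fin (N - i)) ℕ) :
    uMat p N i B = toQ p (1 + cornerMat ℤ_[p] N i B) := by
  rw [toQ_eq_mapMatrix, map_add, map_one, RingHom.mapMatrix_apply, cornerMat_map]
  ext k l
  rw [uMat, Matrix.add_apply, cornerMat, one_apply]
  split_ifs with h h'
  · exact absurd (congrArg Fin.val h') (by omega)
  all_goals simp

def tInt (N i : ℕ) : Matrix (Fin N) (Fin N) ℤ_[p] :=
  diagonal fun k => if (k : ℕ) < i then (p : ℤ_[p]) else 1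

theorem toQ_tInt : toQ p (tInt p N i) = tMat p N i := by
  rw [toQ, tInt, tMat, diagonal_map (by simp)]
  congr 1
  ext k
  split_ifs <;> simp

theorem natCast_dvd_of_mul_tInt_eq {X C : Matrix (Fin N) (Fin N) ℤ_[p]}
    (h : X * tInt p N i = tInt p N i * C) {k l : Fin N} (hk : (k : ℕ) < i)
    (hl : i ≤ (l : ℕ)) :
    (p : ℤ_[p]) ∣ X k l := by
  have := congr_fun (congr_fun h k) l
  simp only [tInt, mul_diagonal, diagonal_mul, if_pos hk, if_neg (not_lt.2 hl), mul_one] at this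
  exact ⟨_, this⟩

theorem exists_mul_tInt_eq_tInt_mul {X : Matrix (Fin N) (Fin N) ℤ_[p]}
    (hX : ∀ k l : Fin N, (k : ℕ) < i → i ≤ (l : ℕ) → (p : ℤ_[p]) ∣ X k l) :
    ∃ C, X * tInt p N i = tInt p N i * C ∧
      (∀ k l : Fin N, (l : ℕ) < i → i ≤ (k : ℕ) → C k l = p * X k l) ∧
      ∀ k l : Fin N, ¬((k : ℕ) < i ∧ i ≤ (l : ℕ)) →
        ¬((l : ℕ) < i ∧ i ≤ (k : ℕ)) → C k l = X k l := by
  choose z hz using hX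
  let C : Matrix (Fin N) (Fin N) ℤ_[p] := Matrix.of fun k l =>
    if h : (k : ℕ) < i ∧ i ≤ (l : ℕ) then z k l h.1 h.2
    else if (l : ℕ) < i ∧ i ≤ (k : ℕ) then p * X k l else X k l
  refine ⟨C, ?_, fun k l hl hk => ?_, fun k l h h' => ?_⟩
  · ext k l
    simp only [tInt, mul_diagonal, diagonal_mul, C, of_apply]
    by_cases hk : (k : ℕ) < i <;> by_cases hl : (l : ℕ) < i
    · rw [if_pos hk, if_pos hl, dif_neg (by omega), if_neg (by omega), mul_comm]
    · rw [if_pos hk, if_neg hl, dif_pos ⟨hk, by omega⟩, mul_one, ← hz]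
    · rw [if_neg hk, if_pos hl, dif_neg (by omega), if_pos ⟨hl, by omega⟩, one_mul, mul_comm]
    · rw [if_neg hk, if_neg hl, dif_neg (by omega), if_neg (by omega), one_mul, mul_one]
  · simp only [C, of_apply]
    rw [dif_neg (by omega), if_pos ⟨hl, hk⟩]
  · simp only [C, of_apply]
    rw [dif_neg h, if_neg h']

theorem exists_conj_tInt {b : Fin N → α} (hb : SplitsAt b i) {X : Matrix (Fin N) (Fin N) ℤ_[p]}
    (hX : BlockUnipotent (redMat p r X) b)
    (hdvd : ∀ k l : Fin N, (k : ℕ) < i → i ≤ (l : ℕ) → (p : ℤ_[p]) ∣ X k l) :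
    ∃ C, X * tInt p N i = tInt p N i * C ∧ BlockUnipotent (redMat p r C) b ∧
      C.det = X.det := by
  obtain ⟨C, hXC, hlow, hmid⟩ := exists_mul_tInt_eq_tInt_mul p hdvd
  refine ⟨C, hXC, hX.of_eq_of_not_lt fun k l hkl => ?_, ?_⟩
  · by_cases hlk : (l : ℕ) < i ∧ i ≤ (k : ℕ)
    · have h0 : PadicInt.toZModPow r (X k l) = 0 := hX.1 (hb l k hlk.1 hlk.2)
      simp only [redMat, map_apply]
      rw [hlow k l hlk.1 hlk.2, map_mul, h0, mul_zero]
    · simp only [redMat, map_apply]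
      rw [hmid k l (fun h => hkl (hb k l h.1 h.2)) hlk]
  · have hT : (tInt p N i).det ≠ 0 := by
      rw [tInt, det_diagonal, Finset.prod_ne_zero_iff]
      intro k _
      split_ifs
      · exact_mod_cast (Fact.out : p.Prime).ne_zero
      · exact one_ne_zero
    exact mul_left_cancel₀ hT (by rw [← det_mul, ← hXC, det_mul, mul_comm])

theorem exists_lt_dvd_corner (hiN : i ≤ N) {a : Matrix (Fin N) (Fin N) ℤ_[p]} {b : Fin N → α}
    (ha : BlockUnipotent (redMat p 1 a) b) :
    ∃ B : Matrix (Fin i) (Fin (N - i)) ℕ, (∀ k l, B k l < p) ∧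
      ∀ k l : Fin N, (k : ℕ) < i → i ≤ (l : ℕ) →
        (p : ℤ_[p]) ∣ ((1 - cornerMat ℤ_[p] N i B) * a) k l := by
  set abar := redMat p 1 a
  set D := abar.submatrix (botIdx (i := i)) botIdx
  have hD : IsUnit D.det := (ha.submatrix botIdx_injective).det_eq_one ▸ isUnit_one
  set A : Matrix (Fin i) (Fin (N - i)) (ZMod (p ^ 1)) := abar.submatrix (Fin.castLE hiN) botIdx
  set Bbar := A * D⁻¹ with hBbar
  have hBD : Bbar * D = A := by
    rw [hBbar, Matrix.mul_assoc, nonsing_inv_mul _ hD, Matrix.mul_one]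
  refine ⟨Bbar.map ZMod.val, fun k l => by simpa using (Bbar k l).val_lt,
    fun k l hk hl => ?_⟩
  obtain ⟨l, rfl⟩ : ∃ l', botIdx (i := i) l' = l :=
    ⟨⟨l - i, by omega⟩, Fin.ext (by simp [botIdx]; omega)⟩
  rw [natCast_dvd_iff_toZModPow_one_eq_zero, Matrix.sub_mul, Matrix.one_mul, Matrix.sub_apply,
    cornerMat_mul_apply _ hk, map_sub, map_sum]
  calc _ = abar k (botIdx l) - (Bbar * D) ⟨k, hk⟩ l := by
        simp [mul_apply, abar, D, redMat]
    _ = 0 := by rw [hBD]; exact sub_self _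

theorem exists_mul_tInt_eq (hiN : i ≤ N) {b : Fin N → α} (hb : SplitsAt b i) (hr : 1 ≤ r)
    (a : GL (Fin N) ℤ_[p]) (ha : BlockUnipotent (redMat p r a.val) b) :
    ∃ B : Matrix (Fin i) (Fin (N - i)) ℕ, (∀ k l, B k l < p) ∧
      ∃ c : GL (Fin N) ℤ_[p], BlockUnipotent (redMat p r c.val) b ∧
        a.val * tInt p N i = (1 + cornerMat ℤ_[p] N i B) * tInt p N i * c.val := by
  obtain ⟨B, hBp, hdvd⟩ :=
    exists_lt_dvd_corner p hiN (redMat_eq_map_redMat p hr a.val ▸ ha.map _)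
  have hw := blockUnipotent_one_sub_cornerMat (R := ℤ_[p]) (B := B) hb
  obtain ⟨C, hXC, hC, hdet⟩ := exists_conj_tInt p hb
    (by rw [redMat_mul]; exact (hw.map _).mul ha) hdvd
  have hCunit : IsUnit C.det := by
    rw [hdet, det_mul, hw.det_eq_one, one_mul]
    exact (isUnit_iff_isUnit_det _).1 a.isUnit
  refine ⟨B, hBp, nonsingInvUnit C hCunit, hC, ?_⟩
  calc a.val * tInt p N i
      = (1 + cornerMat ℤ_[p] N i B) * ((1 - cornerMat ℤ_[p] N i B) * a.val * tInt p N i) := by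
        rw [← Matrix.mul_assoc, ← Matrix.mul_assoc, one_add_cornerMat_mul_one_sub_cornerMat,
          Matrix.one_mul]
    _ = _ := by rw [hXC, Matrix.mul_assoc]; rfl

theorem eq_of_one_add_cornerMat_mul_eq (hiN : i ≤ N)
    {B₁ B₂ : Matrix (Fin i) (Fin (N - i)) ℕ}
    (h₁ : ∀ k l, B₁ k l < p) (h₂ : ∀ k l, B₂ k l < p) (c₁ c₂ : GL (Fin N) ℤ_[p])
    (h : (1 + cornerMat ℤ_[p] N i B₁) * tInt p N i * c₁.val =
      (1 + cornerMat ℤ_[p] N i B₂) * tInt p N i * c₂.val) :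
    B₁ = B₂ := by
  have key : (1 + cornerMat ℤ_[p] N i B₁ - cornerMat ℤ_[p] N i B₂) * tInt p N i =
      tInt p N i * (c₂ * c₁⁻¹ : GL (Fin N) ℤ_[p]).val := by
    calc _ = (1 - cornerMat ℤ_[p] N i B₂) *
          ((1 + cornerMat ℤ_[p] N i B₁) * tInt p N i * c₁.val) * (c₁⁻¹).val := by
          rw [← one_sub_cornerMat_mul_one_add_cornerMat]
          simp [Matrix.mul_assoc]
      _ = _ := by
          rw [h, ← Matrix.mul_assoc, ← Matrix.mul_assoc,
            one_sub_cornerMat_mul_one_add_cornerMat, add_sub_cancel_right, Matrix.one_mul]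
          simp [Matrix.mul_assoc]
  ext k l
  have hk : (Fin.castLE hiN k : ℕ) < i := k.isLt
  have := natCast_dvd_of_mul_tInt_eq p key hk (by simp [botIdx] : i ≤ (botIdx l : ℕ))
  rw [Matrix.sub_apply, Matrix.add_apply,
    one_apply_ne fun h => by simp [botIdx, Fin.ext_iff] at h; omega,
    cornerMat_apply_botIdx hk, cornerMat_apply_botIdx hk, zero_add] at this
  exact eq_of_natCast_dvd_sub p (h₁ _ _) (h₂ _ _) this

end Padic

section Cosets

variable {α : Type*} [LinearOrder α] {N i r : ℕ}

theorem mem_doubleCoset_iff (hiN : i ≤ N) {b : Fin N → α} (hb : SplitsAt b i) (hr : 1 ≤ r)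
    (x : Matrix (Fin N) (Fin N) ℚ_[p]) :
    (∃ a c : GL (Fin N) ℤ_[p], BlockUnipotent (redMat p r a.val) b ∧
        BlockUnipotent (redMat p r c.val) b ∧ x = toQ p a.val * tMat p N i * toQ p c.val) ↔
      ∃ B : Matrix (Fin i) (Fin (N - i)) ℕ, (∀ k l, B k l < p) ∧
        ∃ c : GL (Fin N) ℤ_[p], BlockUnipotent (redMat p r c.val) b ∧
          x = uMat p N i B * tMat p N i * toQ p c.val := by
  constructor
  · rintro ⟨a, c, ha, hc, rfl⟩
    obtain ⟨B, hB, c', hc', hac⟩ := exists_mul_tInt_eq p hiN hb hr a ha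
    refine ⟨B, hB, c' * c, ?_, ?_⟩
    · rw [Units.val_mul, redMat_mul]
      exact hc'.mul hc
    · rw [uMat_eq_toQ, ← toQ_tInt, ← toQ_mul, ← toQ_mul, ← toQ_mul, ← toQ_mul, hac,
        Units.val_mul, Matrix.mul_assoc]
  · rintro ⟨B, -, c, hc, rfl⟩
    have hu := blockUnipotent_one_add_cornerMat (R := ℤ_[p]) (B := B) hb
    exact ⟨hu.isUnit.unit, c, hu.map _, hc, by rw [uMat_eq_toQ]; rfl⟩

theorem eq_of_uMat_mul_tMat_mul_eq (hiN : i ≤ N) {B₁ B₂ : Matrix (Fin i) (Fin (N - i)) ℕ}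
    (h₁ : ∀ k l, B₁ k l < p) (h₂ : ∀ k l, B₂ k l < p) (c₁ c₂ : GL (Fin N) ℤ_[p])
    (h : uMat p N i B₁ * tMat p N i * toQ p c₁.val =
      uMat p N i B₂ * tMat p N i * toQ p c₂.val) :
    B₁ = B₂ :=
  eq_of_one_add_cornerMat_mul_eq p hiN h₁ h₂ c₁ c₂ <| toQ_injective p <| by
    simpa only [toQ_mul, toQ_tInt, ← uMat_eq_toQ] using h

theorem ncard_setOf_forall_lt (m n q : ℕ) :
    {B : Matrix (Fin m) (Fin n) ℕ | ∀ k l, B k l < q}.ncard = q ^ (m * n) := by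
  have : {B : Matrix (Fin m) (Fin n) ℕ | ∀ k l, B k l < q} =
      Set.range fun f : Matrix (Fin m) (Fin n) (Fin q) => f.map Fin.val := by
    ext B
    exact ⟨fun h => ⟨of fun k l => ⟨B k l, h k l⟩, rfl⟩,
      by rintro ⟨f, rfl⟩ k l; exact (f k l).isLt⟩
  rw [this, Set.ncard_range_of_injective (map_injective Fin.val_injective)]
  change Nat.card (Fin m → Fin n → Fin q) = _
  rw [Nat.card_fun, Nat.card_fun, Nat.card_fin, Nat.card_fin, Nat.card_fin, ← pow_mul, mul_comm]

theorem ncard_cosets (hiN : i ≤ N) (b : Fin N → α) :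
    {S : Set (Matrix (Fin N) (Fin N) ℚ_[p]) | ∃ B : Matrix (Fin i) (Fin (N - i)) ℕ,
      (∀ k l, B k l < p) ∧ S = {x | ∃ c : GL (Fin N) ℤ_[p],
        BlockUnipotent (redMat p r c.val) b ∧
          x = uMat p N i B * tMat p N i * toQ p c.val}}.ncard = p ^ (i * (N - i)) := by
  set coset := fun B : Matrix (Fin i) (Fin (N - i)) ℕ => {x | ∃ c : GL (Fin N) ℤ_[p],
    BlockUnipotent (redMat p r c.val) b ∧ x = uMat p N i B * tMat p N i * toQ p c.val}
  have hinj : Set.InjOn coset {B | ∀ k l, B k l < p} := by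
    intro B₁ h₁ B₂ h₂ hcoset
    have hmem : uMat p N i B₁ * tMat p N i * toQ p (1 : GL (Fin N) ℤ_[p]).val ∈ coset B₁ :=
      ⟨1, (BlockUnipotent.one b).map _, rfl⟩
    obtain ⟨c, -, hc⟩ := hcoset ▸ hmem
    exact eq_of_uMat_mul_tMat_mul_eq p hiN h₁ h₂ 1 c hc
  have himage :
      {S | ∃ B, (∀ k l, B k l < p) ∧ S = coset B} = coset '' {B | ∀ k l, B k l < p} := by
    ext S
    exact ⟨fun ⟨B, hB, hS⟩ => ⟨B, hB, hS.symm⟩, fun ⟨B, hB, hS⟩ => ⟨B, hB, hS.symm⟩⟩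
  rw [himage, hinj.ncard_image, ncard_setOf_forall_lt]

end Cosets

section Partition

variable {t : ℕ} (nn : Fin t → ℕ)

theorem Dsum_mono : Monotone (Dsum nn) :=
  fun _ _ h => Finset.sum_le_sum_of_subset (Finset.range_subset_range.2 h)

theorem blkOf_le_of_lt_Dsum {k j : ℕ} (hk : k < Dsum nn (j + 1)) : blkOf nn k ≤ j := by
  refine (Finset.card_le_card fun x hx => ?_).trans (Finset.card_range j).le
  simp only [Finset.mem_filter, Finset.mem_range] at hx ⊢
  by_contra hxj
  exact absurd ((Dsum_mono nn (by omega : j + 1 ≤ x + 1)).trans hx.2) (by omega)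

theorem lt_blkOf_of_Dsum_le {l j : ℕ} (hj : j < t) (hl : Dsum nn (j + 1) ≤ l) :
    j < blkOf nn l := by
  refine (Finset.card_range (j + 1)).symm.le.trans (Finset.card_le_card fun x hx => ?_)
  simp only [Finset.mem_filter, Finset.mem_range] at hx ⊢
  exact ⟨by omega, (Dsum_mono nn (by omega)).trans hl⟩

theorem splitsAt_bfun (j : Fin t) : SplitsAt (bfun nn) (Dsum nn (j + 1)) :=
  fun _ _ hk hl => (blkOf_le_of_lt_Dsum nn hk).trans_lt (lt_blkOf_of_Dsum_le nn j.isLt hl)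

end Partition

theorem double_coset_decomposition {t : ℕ} (nn : Fin t → ℕ) (r : ℕ) (hr : 1 ≤ r) (j : Fin t) :
    -- the double coset is the union of the cosets `u(B')·t_i·I_r`
    (∀ x : Matrix (Fin (Dsum nn t)) (Fin (Dsum nn t)) ℚ_[p],
      (∃ a b : GL (Fin (Dsum nn t)) ℤ_[p], memIw p nn r a ∧ memIw p nn r b ∧
          x = toQ p a.val * tMat p (Dsum nn t) (Dsum nn ((j : ℕ) + 1)) * toQ p b.val) ↔
        (∃ (B' : Matrix (Fin (Dsum nn ((j : ℕ) + 1)))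
              (Fin (Dsum nn t - Dsum nn ((j : ℕ) + 1))) ℕ),
          (∀ k l, B' k l < p) ∧
          ∃ c : GL (Fin (Dsum nn t)) ℤ_[p], memIw p nn r c ∧
            x = uMat p (Dsum nn t) (Dsum nn ((j : ℕ) + 1)) B' *
              tMat p (Dsum nn t) (Dsum nn ((j : ℕ) + 1)) * toQ p c.val)) ∧
    -- the union is disjoint: distinct representatives give disjoint left cosets
    (∀ (B₁ B₂ : Matrix (Fin (Dsum nn ((j : ℕ) + 1)))
        (Fin (Dsum nn t - Dsum nn ((j : ℕ) + 1))) ℕ),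
      (∀ k l, B₁ k l < p) → (∀ k l, B₂ k l < p) →
      ∀ c₁ c₂ : GL (Fin (Dsum nn t)) ℤ_[p], memIw p nn r c₁ → memIw p nn r c₂ →
        uMat p (Dsum nn t) (Dsum nn ((j : ℕ) + 1)) B₁ *
            tMat p (Dsum nn t) (Dsum nn ((j : ℕ) + 1)) * toQ p c₁.val =
          uMat p (Dsum nn t) (Dsum nn ((j : ℕ) + 1)) B₂ *
            tMat p (Dsum nn t) (Dsum nn ((j : ℕ) + 1)) * toQ p c₂.val →
        B₁ = B₂) ∧
    -- there are exactly `p^{i·(n−i)}` distinct left cosets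
    Set.ncard {S : Set (Matrix (Fin (Dsum nn t)) (Fin (Dsum nn t)) ℚ_[p]) |
        ∃ (B' : Matrix (Fin (Dsum nn ((j : ℕ) + 1)))
            (Fin (Dsum nn t - Dsum nn ((j : ℕ) + 1))) ℕ),
          (∀ k l, B' k l < p) ∧
          S = {x | ∃ c : GL (Fin (Dsum nn t)) ℤ_[p], memIw p nn r c ∧
            x = uMat p (Dsum nn t) (Dsum nn ((j : ℕ) + 1)) B' *
              tMat p (Dsum nn t) (Dsum nn ((j : ℕ) + 1)) * toQ p c.val}} =
      p ^ (Dsum nn ((j : ℕ) + 1) * (Dsum nn t - Dsum nn ((j : ℕ) + 1))) := by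
  have hiN : Dsum nn (j + 1) ≤ Dsum nn t := Dsum_mono nn j.isLt
  have hb := splitsAt_bfun nn j
  exact ⟨mem_doubleCoset_iff p hiN hb hr,
    fun B₁ B₂ h₁ h₂ c₁ c₂ _ _ => eq_of_uMat_mul_tMat_mul_eq p hiN h₁ h₂ c₁ c₂,
    ncard_cosets p hiN (bfun nn)⟩

end PIw
end
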